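/- arXiv:1903.05151 — 3 statements merged into one kernel-verified Lean document; each statement's English description precedes it below -/
import Mathlib

section
/- Let p ≥ 1 and let bᵢ > aᵢ > 0 and Aᵢ > 0 for i = 1,…,p. Define β_k = ∏_{i=1}^p [Γ(bᵢ)Γ(aᵢ + (k−1)Aᵢ)] / [Γ(aᵢ)Γ(bᵢ + (k−1)Aᵢ)] for k ≥ 1. Then β_1 = 1, each β_k ≥ 0, the sequence (β_k) is decreasing (β_k ≥ β_{k+1} for all k), and convex (β_k − 2β_{k+1} + β_{k+2} ≥ 0 for all k). -/
open Real Filter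

lemma gamma_cross {x y A : ℝ} (hx : 0 < x) (hxy : x < y) (hA : 0 < A) :
    Real.Gamma (x + A) * Real.Gamma y ≤ Real.Gamma x * Real.Gamma (y + A) := by
  have hy : 0 < y := hx.trans hxy
  have hxA : 0 < x + A := by linarith
  have hyA : 0 < y + A := by linarith
  set L : ℝ → ℝ := Real.log ∘ Real.Gamma with hL
  have hconv : ConvexOn ℝ (Set.Ioi 0) L := Real.convexOn_log_Gamma
  have h1 : (L (x + A) - L x) / (x + A - x) ≤ (L (y + A) - L x) / (y + A - x) :=
    hconv.secant_mono (Set.mem_Ioi.mpr hx) (Set.mem_Ioi.mpr hxA) (Set.mem_Ioi.mpr hyA)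
      (by intro h; nlinarith [congrArg id h]) (by intro h; nlinarith [congrArg id h])
      (by linarith)
  have h2 : (L x - L (y + A)) / (x - (y + A)) ≤ (L y - L (y + A)) / (y - (y + A)) :=
    hconv.secant_mono (Set.mem_Ioi.mpr hyA) (Set.mem_Ioi.mpr hx) (Set.mem_Ioi.mpr hy)
      (by intro h; nlinarith [congrArg id h]) (by intro h; nlinarith [congrArg id h])
      hxy.le
  have e1 : (L x - L (y + A)) / (x - (y + A)) = (L (y + A) - L x) / (y + A - x) := by
    rw [← neg_div_neg_eq]; ring_nf
  have e2 : (L y - L (y + A)) / (y - (y + A)) = (L (y + A) - L y) / A := by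
    rw [← neg_div_neg_eq]; ring_nf
  have hslope : (L (x + A) - L x) / A ≤ (L (y + A) - L y) / A := by
    have := h1.trans (e1 ▸ e2 ▸ h2)
    simpa using this
  have hdiff : L (x + A) - L x ≤ L (y + A) - L y :=
    (div_le_div_iff_of_pos_right hA).mp hslope
  have hGx := Real.Gamma_pos_of_pos hx
  have hGy := Real.Gamma_pos_of_pos hy
  have hGxA := Real.Gamma_pos_of_pos hxA
  have hGyA := Real.Gamma_pos_of_pos hyA
  have hlog : Real.log (Real.Gamma (x + A) * Real.Gamma y)
      ≤ Real.log (Real.Gamma x * Real.Gamma (y + A)) := by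
    rw [Real.log_mul hGxA.ne' hGy.ne', Real.log_mul hGx.ne' hGyA.ne']
    have : L (x + A) + L y ≤ L x + L (y + A) := by linarith
    simpa [hL, Function.comp] using this
  exact (Real.log_le_log_iff (by positivity) (by positivity)).mp hlog

lemma gammaSeq_cross4 {x y A : ℝ} (hx : 0 < x) (hxy : x < y) (hA : 0 < A) (n : ℕ) :
    Real.GammaSeq (x + A) n ^ 2 * (Real.GammaSeq y n * Real.GammaSeq (y + 2 * A) n) ≤
      Real.GammaSeq x n * Real.GammaSeq (x + 2 * A) n * Real.GammaSeq (y + A) n ^ 2 := by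
  have hy : 0 < y := hx.trans hxy
  rcases Nat.eq_zero_or_pos n with rfl | hn
  · have e : ∀ s : ℝ, s ≠ 0 → Real.GammaSeq s 0 = 0 := by
      intro s hs
      simp [Real.GammaSeq, Real.zero_rpow hs]
    rw [e _ (by linarith), e _ (by linarith), e _ (by linarith), e _ (by linarith)]
    simp
  have hn' : (0 : ℝ) < n := by exact_mod_cast hn
  have hD : (∏ j ∈ Finset.range (n + 1), (x + j)) *
        (∏ j ∈ Finset.range (n + 1), (x + 2 * A + j)) *
        (∏ j ∈ Finset.range (n + 1), (y + A + j)) ^ 2 ≤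
      (∏ j ∈ Finset.range (n + 1), (x + A + j)) ^ 2 *
        ((∏ j ∈ Finset.range (n + 1), (y + j)) *
          (∏ j ∈ Finset.range (n + 1), (y + 2 * A + j))) := by
    rw [← Finset.prod_pow, ← Finset.prod_pow, ← Finset.prod_mul_distrib,
      ← Finset.prod_mul_distrib, ← Finset.prod_mul_distrib, ← Finset.prod_mul_distrib]
    refine Finset.prod_le_prod (fun j _ => ?_) fun j _ => ?_
    · have hj : (0:ℝ) ≤ j := Nat.cast_nonneg j
      positivity
    · have hj : (0:ℝ) ≤ j := Nat.cast_nonneg j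
      nlinarith [mul_nonneg (mul_nonneg (sq_nonneg A) (by linarith : (0:ℝ) ≤ y - x))
        (by linarith : (0:ℝ) ≤ x + y + 2 * (j:ℝ) + 2 * A)]
  have h2A : ∀ s : ℝ, (n:ℝ) ^ (s + 2 * A) = (n:ℝ) ^ s * ((n:ℝ) ^ A) ^ 2 := by
    intro s
    rw [Real.rpow_add hn', show (2:ℝ) * A = A + A by ring, Real.rpow_add hn']
    ring
  have hnum : ((n:ℝ) ^ (x + A) * (Nat.factorial n : ℝ)) ^ 2 *
        ((n:ℝ) ^ y * (Nat.factorial n : ℝ) * ((n:ℝ) ^ (y + 2 * A) * (Nat.factorial n : ℝ))) =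
      (n:ℝ) ^ x * (Nat.factorial n : ℝ) * ((n:ℝ) ^ (x + 2 * A) * (Nat.factorial n : ℝ)) *
        ((n:ℝ) ^ (y + A) * (Nat.factorial n : ℝ)) ^ 2 := by
    rw [h2A, h2A, Real.rpow_add hn' x A, Real.rpow_add hn' y A]
    ring
  have hppos : ∀ s : ℝ, 0 < s →
      0 < ∏ j ∈ Finset.range (n + 1), (s + (j:ℝ)) := by
    intro s hs
    refine Finset.prod_pos fun j _ => ?_
    have : (0:ℝ) ≤ j := Nat.cast_nonneg j
    linarith
  simp only [Real.GammaSeq]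
  rw [div_pow, div_mul_div_comm, div_mul_div_comm, div_pow, div_mul_div_comm,
    div_mul_div_comm]
  rw [div_le_div_iff₀ (by positivity <;> skip) ?hpos]
  case hpos =>
    have h1 := hppos x hx
    have h2 := hppos (x + 2 * A) (by linarith)
    have h3 := hppos (y + A) (by linarith)
    positivity
  · calc ((n:ℝ) ^ (x + A) * (Nat.factorial n : ℝ)) ^ 2 *
          ((n:ℝ) ^ y * (Nat.factorial n : ℝ) * ((n:ℝ) ^ (y + 2 * A) * (Nat.factorial n : ℝ))) *
          ((∏ j ∈ Finset.range (n + 1), (x + j)) *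
            (∏ j ∈ Finset.range (n + 1), (x + 2 * A + j)) *
            (∏ j ∈ Finset.range (n + 1), (y + A + j)) ^ 2)
        = (n:ℝ) ^ x * (Nat.factorial n : ℝ) * ((n:ℝ) ^ (x + 2 * A) * (Nat.factorial n : ℝ)) *
            ((n:ℝ) ^ (y + A) * (Nat.factorial n : ℝ)) ^ 2 *
          ((∏ j ∈ Finset.range (n + 1), (x + j)) *
            (∏ j ∈ Finset.range (n + 1), (x + 2 * A + j)) *
            (∏ j ∈ Finset.range (n + 1), (y + A + j)) ^ 2) := by rw [hnum]
      _ ≤ (n:ℝ) ^ x * (Nat.factorial n : ℝ) * ((n:ℝ) ^ (x + 2 * A) * (Nat.factorial n : ℝ)) *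
            ((n:ℝ) ^ (y + A) * (Nat.factorial n : ℝ)) ^ 2 *
          ((∏ j ∈ Finset.range (n + 1), (x + A + j)) ^ 2 *
            ((∏ j ∈ Finset.range (n + 1), (y + j)) *
              (∏ j ∈ Finset.range (n + 1), (y + 2 * A + j)))) :=
        mul_le_mul_of_nonneg_left hD (by positivity)

lemma gamma_cross4 {x y A : ℝ} (hx : 0 < x) (hxy : x < y) (hA : 0 < A) :
    Real.Gamma (x + A) ^ 2 * (Real.Gamma y * Real.Gamma (y + 2 * A)) ≤
      Real.Gamma x * Real.Gamma (x + 2 * A) * Real.Gamma (y + A) ^ 2 := by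
  have t1 : Tendsto (fun n => Real.GammaSeq (x + A) n ^ 2 *
      (Real.GammaSeq y n * Real.GammaSeq (y + 2 * A) n)) atTop
      (nhds (Real.Gamma (x + A) ^ 2 * (Real.Gamma y * Real.Gamma (y + 2 * A)))) :=
    ((Real.GammaSeq_tendsto_Gamma (x + A)).pow 2).mul
      ((Real.GammaSeq_tendsto_Gamma y).mul (Real.GammaSeq_tendsto_Gamma (y + 2 * A)))
  have t2 : Tendsto (fun n => Real.GammaSeq x n * Real.GammaSeq (x + 2 * A) n *
      Real.GammaSeq (y + A) n ^ 2) atTop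
      (nhds (Real.Gamma x * Real.Gamma (x + 2 * A) * Real.Gamma (y + A) ^ 2)) :=
    ((Real.GammaSeq_tendsto_Gamma x).mul (Real.GammaSeq_tendsto_Gamma (x + 2 * A))).mul
      ((Real.GammaSeq_tendsto_Gamma (y + A)).pow 2)
  exact le_of_tendsto_of_tendsto' t1 t2 fun n => gammaSeq_cross4 hx hxy hA n

theorem beta_seq_props (p : ℕ) (hp : 1 ≤ p) (a b A : Fin p → ℝ)
    (ha : ∀ i, 0 < a i) (hab : ∀ i, a i < b i) (hA : ∀ i, 0 < A i)
    (β : ℕ → ℝ)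
    (hβ : ∀ k, β k = ∏ i, Real.Gamma (b i) * Real.Gamma (a i + k * A i)
      / (Real.Gamma (a i) * Real.Gamma (b i + k * A i))) :
    β 0 = 1 ∧ (∀ k, 0 ≤ β k) ∧ (∀ k, β (k + 1) ≤ β k) ∧
      (∀ k, 0 ≤ β k - 2 * β (k + 1) + β (k + 2)) := by
  have hb : ∀ i, 0 < b i := fun i => (ha i).trans (hab i)
  have hak : ∀ (i) (k : ℕ), 0 < a i + k * A i := fun i k => by
    have := (ha i); have := (hA i); positivity
  have hbk : ∀ (i) (k : ℕ), 0 < b i + k * A i := fun i k => by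
    have := (hb i); have := (hA i); positivity
  have hGpos : ∀ (i) (k : ℕ),
      0 < Real.Gamma (b i) * Real.Gamma (a i + k * A i)
        / (Real.Gamma (a i) * Real.Gamma (b i + k * A i)) := fun i k => by
    have h1 := Real.Gamma_pos_of_pos (hb i)
    have h2 := Real.Gamma_pos_of_pos (hak i k)
    have h3 := Real.Gamma_pos_of_pos (ha i)
    have h4 := Real.Gamma_pos_of_pos (hbk i k)
    positivity
  have hpos : ∀ k, 0 < β k := fun k => by
    rw [hβ k]; exact Finset.prod_pos fun i _ => hGpos i k
  have key : ∀ (i) (k : ℕ),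
      Real.Gamma (a i + k * A i + A i) * Real.Gamma (b i + k * A i) ≤
        Real.Gamma (a i + k * A i) * Real.Gamma (b i + k * A i + A i) := fun i k =>
    gamma_cross (hak i k) (by have := hab i; linarith) (hA i)
  have cast1 : ∀ (i) (k : ℕ), a i + (k + 1 : ℕ) * A i = a i + k * A i + A i := by
    intro i k; push_cast; ring
  have cast1b : ∀ (i) (k : ℕ), b i + (k + 1 : ℕ) * A i = b i + k * A i + A i := by
    intro i k; push_cast; ring
  have cast2 : ∀ (i) (k : ℕ), a i + (k + 2 : ℕ) * A i = a i + k * A i + 2 * A i := by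
    intro i k; push_cast; ring
  have cast2b : ∀ (i) (k : ℕ), b i + (k + 2 : ℕ) * A i = b i + k * A i + 2 * A i := by
    intro i k; push_cast; ring
  refine ⟨?_, fun k => (hpos k).le, ?_, ?_⟩
  · rw [hβ 0]
    refine Finset.prod_eq_one fun i _ => ?_
    have h3 := Real.Gamma_pos_of_pos (ha i)
    have h1 := Real.Gamma_pos_of_pos (hb i)
    rw [Nat.cast_zero, zero_mul, add_zero, add_zero]
    field_simp
  · intro k
    rw [hβ k, hβ (k + 1)]
    refine Finset.prod_le_prod (fun i _ => (hGpos i (k + 1)).le) fun i _ => ?_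
    rw [cast1, cast1b]
    have h1 := Real.Gamma_pos_of_pos (hb i)
    have h3 := Real.Gamma_pos_of_pos (ha i)
    have h2 := Real.Gamma_pos_of_pos (hak i k)
    have h4 := Real.Gamma_pos_of_pos (hbk i k)
    have h5 : 0 < Real.Gamma (b i + k * A i + A i) :=
      Real.Gamma_pos_of_pos (by have := hbk i k; have := hA i; linarith)
    rw [div_le_div_iff₀ (by positivity) (by positivity)]
    nlinarith [key i k, mul_le_mul_of_nonneg_left (key i k) (mul_pos h1 h3).le]
  · intro k
    have hlc : β (k + 1) ^ 2 ≤ β k * β (k + 2) := by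
      rw [hβ k, hβ (k + 1), hβ (k + 2), ← Finset.prod_mul_distrib, ← Finset.prod_pow]
      refine Finset.prod_le_prod (fun i _ => by positivity) fun i _ => ?_
      rw [cast1, cast1b, cast2, cast2b]
      set x := a i + k * A i with hxdef
      set y := b i + k * A i with hydef
      have hx := hak i k
      have hxy : x < y := by have := hab i; simp only [hxdef, hydef]; linarith
      have h4 := gamma_cross4 hx hxy (hA i)
      have hG1 := Real.Gamma_pos_of_pos (ha i)
      have hG2 := Real.Gamma_pos_of_pos (hb i)
      have hGx := Real.Gamma_pos_of_pos hx
      have hGy := Real.Gamma_pos_of_pos (hx.trans hxy)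
      have hGxA : 0 < Real.Gamma (x + A i) :=
        Real.Gamma_pos_of_pos (by have := hA i; linarith)
      have hGyA : 0 < Real.Gamma (y + A i) :=
        Real.Gamma_pos_of_pos (by have := hA i; have := hx.trans hxy; linarith)
      have hGx2 : 0 < Real.Gamma (x + 2 * A i) :=
        Real.Gamma_pos_of_pos (by have := hA i; linarith)
      have hGy2 : 0 < Real.Gamma (y + 2 * A i) :=
        Real.Gamma_pos_of_pos (by have := hA i; have := hx.trans hxy; linarith)
      rw [div_pow, mul_pow, mul_pow, div_mul_div_comm,
        div_le_div_iff₀ (by positivity) (by positivity)]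
      nlinarith [mul_le_mul_of_nonneg_left h4
        (by positivity : (0:ℝ) ≤ Real.Gamma (b i) ^ 2 * Real.Gamma (a i) ^ 2)]
    have h0 := hpos k
    have h1 := hpos (k + 1)
    have h2 := hpos (k + 2)
    nlinarith [sq_nonneg (β k - β (k + 2)), sq_nonneg (β k + β (k + 2) - 2 * β (k + 1))]
end

section
/- Let q ≥ 1, a ≥ 1, b_j ≥ 2a and B_j ≥ 2 for j = 1,…,q. Define U_k = [Γ(a+k)/((k−1)!·Γ(a))]·∏_{j=1}^q [Γ(b_j)/Γ(b_j + kB_j)] for k ≥ 1. Then U_k − 2U_{k+1} ≥ 0 for every k ≥ 1, hence in particular U_k − 2U_{k+1} + U_{k+2} ≥ 0 for every k ≥ 1. -/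
open Real Finset

lemma gamma_step (x B : ℝ) (hx : 2 ≤ x) (hB : 2 ≤ B) :
    x * Real.Gamma x ≤ Real.Gamma (x + B) := by
  have h1 : x * Real.Gamma x = Real.Gamma (x + 1) := (Real.Gamma_add_one (by linarith)).symm
  rw [h1]
  exact Real.Gamma_strictMonoOn_Ici.monotoneOn (by simp; linarith) (by simp; linarith)
    (by linarith)

theorem U_two_step (q : ℕ) (hq : 1 ≤ q) (a : ℝ) (ha : 1 ≤ a) (b B : Fin q → ℝ)
    (hb : ∀ j, 2 * a ≤ b j) (hB : ∀ j, 2 ≤ B j)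
    (U : ℕ → ℝ)
    (hUk : ∀ k, 1 ≤ k → U k = Real.Gamma (a + k) / ((Nat.factorial (k - 1) : ℝ) * Real.Gamma a) *
      ∏ j, Real.Gamma (b j) / Real.Gamma (b j + k * B j)) :
    (∀ k, 1 ≤ k → 0 ≤ U k - 2 * U (k + 1)) ∧
      (∀ k, 1 ≤ k → 0 ≤ U k - 2 * U (k + 1) + U (k + 2)) := by
  have hGa : 0 < Real.Gamma a := Real.Gamma_pos_of_pos (by linarith)
  have hGak : ∀ k : ℕ, 0 < Real.Gamma (a + k) := fun k =>
    Real.Gamma_pos_of_pos (by positivity)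
  have hbkB : ∀ (k : ℕ) (j : Fin q), 1 ≤ k → 2 * (a + k) ≤ b j + k * B j := by
    intro k j hk
    have := hb j; have := hB j
    have hk1 : (1 : ℝ) ≤ k := by exact_mod_cast hk
    nlinarith
  have hGb : ∀ j, 0 < Real.Gamma (b j) := fun j =>
    Real.Gamma_pos_of_pos (by have := hb j; linarith)
  have hGbk : ∀ (k : ℕ) (j : Fin q), 1 ≤ k → 0 < Real.Gamma (b j + k * B j) := by
    intro k j hk
    have := hbkB k j hk
    have hk1 : (1 : ℝ) ≤ k := by exact_mod_cast hk
    exact Real.Gamma_pos_of_pos (by nlinarith)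
  have hUpos : ∀ k, 1 ≤ k → 0 < U k := by
    intro k hk
    rw [hUk k hk]
    have h1 : 0 < Real.Gamma (a + k) / ((Nat.factorial (k - 1) : ℝ) * Real.Gamma a) := by
      apply div_pos (hGak k)
      positivity
    exact mul_pos h1 (Finset.prod_pos fun j _ => div_pos (hGb j) (hGbk k j hk))
  have hmain : ∀ k, 1 ≤ k → 2 * U (k + 1) ≤ U k := by
    intro k hk
    have hk1 : (1 : ℝ) ≤ k := by exact_mod_cast hk
    rw [hUk k hk, hUk (k + 1) (by omega)]
    have hfac : ((k + 1 - 1).factorial : ℝ) = k * ((k - 1).factorial : ℝ) := by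
      have h : k + 1 - 1 = k := by omega
      rw [h]
      obtain ⟨m, rfl⟩ : ∃ m, k = m + 1 := ⟨k - 1, by omega⟩
      rw [show m + 1 - 1 = m from rfl, Nat.factorial_succ]
      push_cast; ring
    have hGsucc : Real.Gamma (a + (k + 1 : ℕ)) = (a + k) * Real.Gamma (a + k) := by
      push_cast
      rw [show a + ((k : ℝ) + 1) = (a + k) + 1 by ring]
      exact Real.Gamma_add_one (by positivity)
    have hPoldpos : 0 < ∏ j, Real.Gamma (b j) / Real.Gamma (b j + k * B j) :=
      Finset.prod_pos fun j _ => div_pos (hGb j) (hGbk k j hk)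
    have key : 2 * (a + k) * ∏ j, Real.Gamma (b j) / Real.Gamma (b j + (k + 1 : ℕ) * B j)
        ≤ k * ∏ j, Real.Gamma (b j) / Real.Gamma (b j + k * B j) := by
      have hstep : ∀ j : Fin q, (b j + k * B j) * Real.Gamma (b j + k * B j)
          ≤ Real.Gamma (b j + (k + 1 : ℕ) * B j) := by
        intro j
        have h2 : (2 : ℝ) ≤ b j + k * B j := by
          have := hbkB k j hk; nlinarith
        calc (b j + k * B j) * Real.Gamma (b j + k * B j)
            ≤ Real.Gamma (b j + k * B j + B j) := gamma_step _ _ h2 (hB j)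
          _ = Real.Gamma (b j + (k + 1 : ℕ) * B j) := by push_cast; ring_nf
      have hterm : ∀ j : Fin q, Real.Gamma (b j) / Real.Gamma (b j + (k + 1 : ℕ) * B j)
          ≤ (1 / (b j + k * B j)) * (Real.Gamma (b j) / Real.Gamma (b j + k * B j)) := by
        intro j
        have h2 : (2 : ℝ) ≤ b j + k * B j := by have := hbkB k j hk; nlinarith
        have hpos : 0 < (b j + k * B j) * Real.Gamma (b j + k * B j) := by
          have := hGbk k j hk; nlinarith
        rw [one_div, ← mul_div_assoc, inv_mul_eq_div, div_div]
        exact div_le_div_of_nonneg_left (le_of_lt (hGb j)) hpos (hstep j)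
      have hprod : ∏ j, Real.Gamma (b j) / Real.Gamma (b j + (k + 1 : ℕ) * B j)
          ≤ ∏ j, (1 / (b j + k * B j)) * (Real.Gamma (b j) / Real.Gamma (b j + k * B j)) := by
        apply Finset.prod_le_prod
        · intro j _
          have hargpos : (0 : ℝ) < b j + (k + 1 : ℕ) * B j := by
            have := hb j; have := hB j
            push_cast
            nlinarith
          exact le_of_lt (div_pos (hGb j) (Real.Gamma_pos_of_pos hargpos))
        · intro j _; exact hterm j
      rw [Finset.prod_mul_distrib] at hprod
      have h1 : 2 * (a + k) ≤ ∏ j : Fin q, (b j + k * B j) := by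
        calc (2 * (a + k)) = (2 * (a + k)) ^ 1 := (pow_one _).symm
          _ ≤ (2 * (a + k)) ^ q := pow_le_pow_right₀ (by nlinarith) hq
          _ = ∏ _j : Fin q, (2 * (a + k)) := by
              simp [Finset.prod_const, Finset.card_univ]
          _ ≤ ∏ j : Fin q, (b j + k * B j) := by
              apply Finset.prod_le_prod
              · intro j _; nlinarith
              · intro j _; exact hbkB k j hk
      have hinvprod : ∏ j : Fin q, (1 / (b j + k * B j)) ≤ 1 / (2 * (a + k)) := by
        simp only [one_div]
        rw [Finset.prod_inv_distrib]
        exact inv_anti₀ (by nlinarith) h1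
      calc 2 * (a + k) * ∏ j, Real.Gamma (b j) / Real.Gamma (b j + (k + 1 : ℕ) * B j)
          ≤ 2 * (a + k) * ((∏ j : Fin q, (1 / (b j + k * B j))) *
              ∏ j, Real.Gamma (b j) / Real.Gamma (b j + k * B j)) := by
            apply mul_le_mul_of_nonneg_left hprod (by nlinarith)
        _ ≤ 2 * (a + k) * ((1 / (2 * (a + k))) *
              ∏ j, Real.Gamma (b j) / Real.Gamma (b j + k * B j)) := by
            apply mul_le_mul_of_nonneg_left
              (mul_le_mul_of_nonneg_right hinvprod (le_of_lt hPoldpos)) (by nlinarith)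
        _ = ∏ j, Real.Gamma (b j) / Real.Gamma (b j + k * B j) := by
            have hne : (2 * (a + (k:ℝ))) ≠ 0 := by positivity
            rw [← mul_assoc, mul_one_div, div_self hne, one_mul]
        _ ≤ k * ∏ j, Real.Gamma (b j) / Real.Gamma (b j + k * B j) := by
            nlinarith
    rw [hfac, hGsucc]
    have hk0 : (k : ℝ) ≠ 0 := by positivity
    have hf0 : ((k - 1).factorial : ℝ) ≠ 0 := by positivity
    have hGa0 : Real.Gamma a ≠ 0 := ne_of_gt hGa
    have hC : (0 : ℝ) < Real.Gamma (a + k) / ((k : ℝ) * ((k - 1).factorial : ℝ) * Real.Gamma a) := by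
      apply div_pos (hGak k); positivity
    have h := mul_le_mul_of_nonneg_left key (le_of_lt hC)
    have e1 : 2 * ((a + (k : ℝ)) * Real.Gamma (a + k) / ((k : ℝ) * ((k - 1).factorial : ℝ) * Real.Gamma a) *
        ∏ j, Real.Gamma (b j) / Real.Gamma (b j + (k + 1 : ℕ) * B j)) =
        Real.Gamma (a + k) / ((k : ℝ) * ((k - 1).factorial : ℝ) * Real.Gamma a) *
        (2 * (a + k) * ∏ j, Real.Gamma (b j) / Real.Gamma (b j + (k + 1 : ℕ) * B j)) := by
      ring
    have e2 : Real.Gamma (a + k) / (((k - 1).factorial : ℝ) * Real.Gamma a) *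
        ∏ j, Real.Gamma (b j) / Real.Gamma (b j + k * B j) =
        Real.Gamma (a + k) / ((k : ℝ) * ((k - 1).factorial : ℝ) * Real.Gamma a) *
        ((k : ℝ) * ∏ j, Real.Gamma (b j) / Real.Gamma (b j + k * B j)) := by
      rw [div_mul_eq_mul_div, div_mul_eq_mul_div,
        div_eq_div_iff (by positivity) (by positivity)]
      ring
    rw [e1, e2]
    exact h
  constructor
  · intro k hk
    have := hmain k hk
    linarith
  · intro k hk
    have h1 := hmain k hk
    have h2 := hUpos (k + 2) (by omega)
    linarith
end

section
/- Let p ≥ 1, and a_i, b_i, A > 0 with b_i ≥ a_i for all i, such that ∏_{i=1}^p [Γ(a_i+A)/Γ(b_i+A) + (e−1)Γ(a_i+2A)/Γ(b_i+2A)] ≤ ∏_{i=1}^p Γ(a_i)/Γ(b_i). Then the function f(z) = Σ_{k=0}^∞ ∏_{i=1}^p [Γ(b_i)Γ(a_i + kA)/(Γ(a_i)Γ(b_i + kA))] · z^{k+1}/k! satisfies |f(z)/z − 1| < 1 for all |z| < 1, hence f is starlike on the disc of radius 1/2. -/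
open scoped Nat

lemma fw_gamma_cross {a b x y : ℝ} (ha : 0 < a) (hab : a ≤ b) (hx : 0 ≤ x) (hxy : x ≤ y) :
    Real.Gamma (a + y) * Real.Gamma (b + x) ≤ Real.Gamma (a + x) * Real.Gamma (b + y) := by
  rcases eq_or_lt_of_le (add_le_add hab hxy : a + x ≤ b + y) with heq | hlt
  · have h1 : a = b := by linarith
    have h2 : x = y := by linarith
    rw [h1, h2, mul_comm]
  · set m := a + x with hm
    set M := b + y with hM
    have hmpos : 0 < m := by linarith
    have hMpos : 0 < M := by linarith
    have hu1 : m ≤ a + y := by linarith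
    have hu2 : a + y ≤ M := by linarith
    have hv1 : m ≤ b + x := by linarith
    have hv2 : b + x ≤ M := by linarith
    have hMm : 0 < M - m := by linarith
    set μ := (M - (a + y)) / (M - m) with hμ
    have hμ0 : 0 ≤ μ := div_nonneg (by linarith) hMm.le
    have hμ1 : 0 ≤ 1 - μ := by
      have : μ ≤ 1 := by rw [hμ, div_le_one hMm]; linarith
      linarith
    have hconv := Real.convexOn_log_Gamma
    have h1 := hconv.2 (Set.mem_Ioi.mpr hmpos) (Set.mem_Ioi.mpr hMpos) hμ0 hμ1 (by ring)
    have h2 := hconv.2 (Set.mem_Ioi.mpr hmpos) (Set.mem_Ioi.mpr hMpos) hμ1 hμ0 (by ring)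
    rw [smul_eq_mul, smul_eq_mul, smul_eq_mul, smul_eq_mul] at h1 h2
    have e1 : μ * m + (1 - μ) * M = a + y := by
      field_simp [hμ]
      have h' : μ * (M - m) = M - (a + y) := by rw [hμ]; exact div_mul_cancel₀ _ hMm.ne'
      linear_combination -h'
    have e2 : (1 - μ) * m + μ * M = b + x := by
      have : (1 - μ) * m + μ * M = m + M - (μ * m + (1 - μ) * M) := by ring
      rw [this, e1]; ring
    rw [e1] at h1
    rw [e2] at h2
    have key : Real.log (Real.Gamma (a + y)) + Real.log (Real.Gamma (b + x)) ≤
        Real.log (Real.Gamma m) + Real.log (Real.Gamma M) := by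
      simp only [Function.comp] at h1 h2
      linarith
    have hg1 : 0 < Real.Gamma (a + y) := Real.Gamma_pos_of_pos (by linarith)
    have hg2 : 0 < Real.Gamma (b + x) := Real.Gamma_pos_of_pos (by linarith)
    have hg3 : 0 < Real.Gamma m := Real.Gamma_pos_of_pos hmpos
    have hg4 : 0 < Real.Gamma M := Real.Gamma_pos_of_pos hMpos
    have := Real.exp_le_exp.mpr key
    rwa [Real.exp_add, Real.exp_add, Real.exp_log hg1, Real.exp_log hg2, Real.exp_log hg3,
      Real.exp_log hg4] at this

lemma fw_summable_aux : Summable (fun k : ℕ => ((k : ℝ) + 1) / k !) := by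
  apply Summable.of_nonneg_of_le (fun k => by positivity) (fun k => ?_)
    ((Real.summable_pow_div_factorial 2).mul_left 4)
  have h1 : ((k : ℝ) + 1) ≤ 4 * 2 ^ k := by
    have h0 : k + 1 ≤ 4 * 2 ^ k := le_trans (Nat.lt_two_pow_self (n := k)) (by
      have : 2 ^ k ≤ 4 * 2 ^ k := Nat.le_mul_of_pos_left _ (by norm_num)
      omega)
    exact_mod_cast h0
  calc ((k : ℝ) + 1) / k ! ≤ (4 * 2 ^ k) / k ! := by
        gcongr
      _ = 4 * (2 ^ k / k !) := by ring

lemma fw_main (c : ℕ → ℝ) (hc0 : c 0 = 1) (hcpos : ∀ k, 0 < c k)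
    (hmono : ∀ j k : ℕ, j ≤ k → c k ≤ c j) (hc12 : c 1 + c 2 ≤ 1)
    (f : ℂ → ℂ)
    (hf : ∀ z : ℂ, f z = ∑' k : ℕ, (c k : ℂ) * z ^ (k + 1) / (Nat.factorial k : ℂ)) :
    (∀ z : ℂ, ‖z‖ < 1 → z ≠ 0 → ‖f z / z - 1‖ < 1) ∧
      (∀ z : ℂ, ‖z‖ < 1 / 2 → z ≠ 0 → 0 < (z * deriv f z / f z).re) := by
  have hc_le_one : ∀ k, c k ≤ 1 := fun k => hc0 ▸ hmono 0 k k.zero_le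
  have hS0 : 0 ≤ c 1 + c 2 := by linarith [(hcpos 1).le, (hcpos 2).le]
  -- the dominating sequence
  set d : ℕ → ℝ := fun k => if k = 0 then c 1 else c 2 * (1 / 2) ^ k with hd_def
  have hd_nonneg : ∀ k, 0 ≤ d k := by
    intro k
    simp only [hd_def]
    split
    · exact (hcpos 1).le
    · exact mul_nonneg (hcpos 2).le (by positivity)
  have hd_summable : Summable d := by
    apply Summable.of_nonneg_of_le hd_nonneg (fun k => ?_)
      ((summable_geometric_of_lt_one (by norm_num) (by norm_num : (1/2:ℝ) < 1)).mul_left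
        (c 1 + c 2))
    simp only [hd_def]
    rcases Nat.eq_zero_or_pos k with rfl | hk
    · simp
      linarith [(hcpos 2).le]
    · rw [if_neg hk.ne']
      have : (0:ℝ) ≤ (1/2:ℝ)^k := by positivity
      nlinarith [(hcpos 1).le]
  have hd_tsum : ∑' k, d k = c 1 + c 2 := by
    rw [Summable.tsum_eq_zero_add hd_summable]
    have h0 : d 0 = c 1 := by simp [hd_def]
    have h1 : ∀ k : ℕ, d (k + 1) = c 2 * (1/2 : ℝ) ^ (k + 1) := by
      intro k
      simp [hd_def]
    have h2 : ∑' k : ℕ, d (k + 1) = c 2 := by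
      calc ∑' k : ℕ, d (k + 1) = ∑' k : ℕ, c 2 * ((1/2 : ℝ) ^ k * (1/2)) := by
            refine tsum_congr fun k => ?_
            rw [h1 k, pow_succ]
          _ = c 2 * ((∑' k : ℕ, (1/2 : ℝ) ^ k) * (1/2)) := by
            rw [← tsum_mul_right, ← tsum_mul_left]
          _ = c 2 := by rw [tsum_geometric_two]; ring
    rw [h0, h2]
  -- factorial bound
  have hfact2 : ∀ k : ℕ, (2:ℝ) ^ k ≤ ((k + 1)! : ℝ) := by
    intro k
    have : 2 ^ k ≤ (k + 1)! := by
      induction k with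
      | zero => simp [Nat.factorial]
      | succ n ih =>
        calc 2 ^ (n + 1) = 2 * 2 ^ n := by ring
          _ ≤ (n + 2) * (n + 1)! := Nat.mul_le_mul (by omega) ih
          _ = (n + 2)! := (Nat.factorial_succ _).symm
    exact_mod_cast this
  -- bound A : ∑ c(k+1) t^(k+1)/(k+1)! ≤ t * (c1 + c2)  for 0 ≤ t ≤ 1
  have boundA : ∀ t : ℝ, 0 ≤ t → t ≤ 1 →
      Summable (fun k : ℕ => c (k+1) * t ^ (k+1) / ((k+1)! : ℝ)) ∧
      ∑' k : ℕ, c (k+1) * t ^ (k+1) / ((k+1)! : ℝ) ≤ t * (c 1 + c 2) := by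
    intro t ht0 ht1
    have hterm : ∀ k : ℕ, c (k+1) * t ^ (k+1) / ((k+1)! : ℝ) ≤ t * d k := by
      intro k
      rcases Nat.eq_zero_or_pos k with rfl | hk
      · simp [hd_def, Nat.factorial]
        nlinarith [hcpos 1]
      · have hdk : d k = c 2 * (1/2:ℝ)^k := by simp [hd_def, hk.ne']
        rw [hdk]
        have h1 : t ^ (k+1) ≤ t := by
          calc t ^ (k+1) ≤ t ^ 1 := pow_le_pow_of_le_one ht0 ht1 (by omega)
            _ = t := pow_one t
        have h2 : c (k+1) ≤ c 2 := hmono 2 (k+1) (by omega)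
        calc c (k+1) * t ^ (k+1) / ((k+1)! : ℝ) ≤ c 2 * t / 2 ^ k := by
              apply div_le_div₀ (mul_nonneg (hcpos 2).le ht0) ?_ (by positivity) (hfact2 k)
              exact mul_le_mul h2 h1 (by positivity) (hcpos 2).le
          _ = t * (c 2 * (1/2:ℝ)^k) := by
              rw [div_pow, one_pow]
              ring
    have hsA : Summable (fun k : ℕ => c (k+1) * t ^ (k+1) / ((k+1)! : ℝ)) :=
      Summable.of_nonneg_of_le
        (fun k => div_nonneg (mul_nonneg (hcpos _).le (by positivity)) (by positivity))
        hterm (hd_summable.mul_left t)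
    refine ⟨hsA, ?_⟩
    calc ∑' k : ℕ, c (k+1) * t ^ (k+1) / ((k+1)! : ℝ) ≤ ∑' k : ℕ, t * d k :=
          Summable.tsum_le_tsum hterm hsA (hd_summable.mul_left t)
      _ = t * (c 1 + c 2) := by rw [tsum_mul_left, hd_tsum]
  -- bound B : ∑ c(k+1) t^k/k! ≤ c1 + c2 for 0 ≤ t ≤ 1/2
  have boundB : ∀ t : ℝ, 0 ≤ t → t ≤ 1/2 →
      Summable (fun k : ℕ => c (k+1) * t ^ k / (k ! : ℝ)) ∧
      ∑' k : ℕ, c (k+1) * t ^ k / (k ! : ℝ) ≤ c 1 + c 2 := by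
    intro t ht0 ht2
    have hterm : ∀ k : ℕ, c (k+1) * t ^ k / (k ! : ℝ) ≤ d k := by
      intro k
      rcases Nat.eq_zero_or_pos k with rfl | hk
      · simp [hd_def, Nat.factorial]
      · have hdk : d k = c 2 * (1/2:ℝ)^k := by simp [hd_def, hk.ne']
        rw [hdk]
        have h1 : t ^ k ≤ (1/2:ℝ) ^ k := pow_le_pow_left₀ ht0 ht2 k
        have h2 : c (k+1) ≤ c 2 := hmono 2 (k+1) (by omega)
        have h3 : (1:ℝ) ≤ (k ! : ℝ) := by exact_mod_cast Nat.one_le_iff_ne_zero.mpr k.factorial_ne_zero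
        calc c (k+1) * t ^ k / (k ! : ℝ) ≤ c 2 * (1/2:ℝ)^k / 1 := by
              apply div_le_div₀ (mul_nonneg (hcpos 2).le (by positivity)) ?_ one_pos h3
              exact mul_le_mul h2 h1 (by positivity) (hcpos 2).le
          _ = c 2 * (1/2:ℝ)^k := by ring
    have hsB : Summable (fun k : ℕ => c (k+1) * t ^ k / (k ! : ℝ)) :=
      Summable.of_nonneg_of_le
        (fun k => div_nonneg (mul_nonneg (hcpos _).le (by positivity)) (by positivity))
        hterm hd_summable
    exact ⟨hsB, le_trans (Summable.tsum_le_tsum hterm hsB hd_summable) hd_tsum.le⟩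
  -- norms of complex terms
  have hnorm1 : ∀ (k : ℕ) (z : ℂ) (n m : ℕ), ‖(c k : ℂ) * z ^ n / (m ! : ℂ)‖
      = c k * ‖z‖ ^ n / (m ! : ℝ) := by
    intro k z n m
    rw [norm_div, norm_mul, norm_pow]
    simp [Complex.norm_real, Real.norm_eq_abs, abs_of_pos (hcpos k),
      Complex.norm_natCast]
  -- summability of the defining series
  have hTsum : ∀ z : ℂ, Summable (fun k : ℕ => (c k : ℂ) * z ^ (k + 1) / (k ! : ℂ)) := by
    intro z
    apply Summable.of_norm
    apply Summable.congr ?_ (fun k => (hnorm1 k z (k+1) k).symm)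
    apply Summable.of_nonneg_of_le
      (fun k => div_nonneg (mul_nonneg (hcpos _).le (by positivity)) (by positivity))
      (fun k => ?_) ((Real.summable_pow_div_factorial ‖z‖).mul_left ‖z‖)
    calc c k * ‖z‖ ^ (k+1) / (k ! : ℝ) ≤ 1 * ‖z‖ ^ (k+1) / (k ! : ℝ) := by
          gcongr
          exact hc_le_one k
      _ = ‖z‖ * (‖z‖ ^ k / (k ! : ℝ)) := by ring

  -- shift identity for f
  have hshift : ∀ z : ℂ, f z - z = ∑' k : ℕ, (c (k+1) : ℂ) * z ^ (k+2) / ((k+1)! : ℂ) := by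
    intro z
    rw [hf z, Summable.tsum_eq_zero_add (hTsum z)]
    have h0 : (c 0 : ℂ) * z ^ (0+1) / ((Nat.factorial 0 : ℕ) : ℂ) = z := by
      simp [hc0]
    rw [h0, add_sub_cancel_left]
  -- norm bound on f z - z
  have hfz_sub : ∀ z : ℂ, ‖z‖ ≤ 1 → ‖f z - z‖ ≤ ‖z‖ * (‖z‖ * (c 1 + c 2)) := by
    intro z hz1
    have hA := boundA ‖z‖ (norm_nonneg z) hz1
    have hnormed : ∀ k : ℕ, ‖(c (k+1) : ℂ) * z ^ (k+2) / ((k+1)! : ℂ)‖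
        = ‖z‖ * (c (k+1) * ‖z‖ ^ (k+1) / ((k+1)! : ℝ)) := by
      intro k
      rw [hnorm1 (k+1) z (k+2) (k+1)]
      ring
    have hsnorm : Summable (fun k : ℕ => ‖(c (k+1) : ℂ) * z ^ (k+2) / ((k+1)! : ℂ)‖) :=
      Summable.congr (hA.1.mul_left ‖z‖) (fun k => (hnormed k).symm)
    rw [hshift z]
    calc ‖∑' k : ℕ, (c (k+1) : ℂ) * z ^ (k+2) / ((k+1)! : ℂ)‖
        ≤ ∑' k : ℕ, ‖(c (k+1) : ℂ) * z ^ (k+2) / ((k+1)! : ℂ)‖ := norm_tsum_le_tsum_norm hsnorm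
      _ = ‖z‖ * ∑' k : ℕ, c (k+1) * ‖z‖ ^ (k+1) / ((k+1)! : ℝ) := by
          rw [← tsum_mul_left]; exact tsum_congr hnormed
      _ ≤ ‖z‖ * (‖z‖ * (c 1 + c 2)) := mul_le_mul_of_nonneg_left hA.2 (norm_nonneg z)
  -- Part 1
  have part1 : ∀ z : ℂ, ‖z‖ < 1 → z ≠ 0 → ‖f z / z - 1‖ < 1 := by
    intro z hz hz0
    have ht : 0 < ‖z‖ := norm_pos_iff.mpr hz0
    rw [div_sub_one hz0, norm_div, div_lt_one ht]
    calc ‖f z - z‖ ≤ ‖z‖ * (‖z‖ * (c 1 + c 2)) := hfz_sub z hz.le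
      _ < ‖z‖ := by nlinarith [mul_pos ht ht]
  -- norm of derivative terms
  have hnorm2 : ∀ (k : ℕ) (z : ℂ), ‖(c k : ℂ) * (((k:ℂ)+1) * z ^ k) / ((k ! : ℕ) : ℂ)‖
      = c k * (((k:ℝ)+1) * ‖z‖ ^ k) / ((k ! : ℕ) : ℝ) := by
    intro k z
    have e1 : ‖((k:ℂ)+1)‖ = (k:ℝ)+1 := by
      rw [show ((k:ℂ)+1) = ((k+1 : ℕ) : ℂ) by push_cast; ring, Complex.norm_natCast]
      push_cast; ring
    rw [norm_div, norm_mul, norm_mul, norm_pow, e1]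
    simp [Complex.norm_real, Real.norm_eq_abs, abs_of_pos (hcpos k), Complex.norm_natCast]
  have hsf' : ∀ z : ℂ, ‖z‖ ≤ 1 →
      Summable (fun k : ℕ => (c k : ℂ) * (((k:ℂ)+1) * z ^ k) / ((k ! : ℕ) : ℂ)) := by
    intro z hz1
    apply Summable.of_norm
    apply Summable.congr ?_ (fun k => (hnorm2 k z).symm)
    apply Summable.of_nonneg_of_le
      (fun k => div_nonneg (mul_nonneg (hcpos _).le (by positivity)) (by positivity))
      (fun k => ?_) fw_summable_aux
    have hp1 : ‖z‖ ^ k ≤ 1 := pow_le_one₀ (norm_nonneg z) hz1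
    calc c k * (((k:ℝ)+1) * ‖z‖ ^ k) / ((k ! : ℕ) : ℝ)
        ≤ 1 * (((k:ℝ)+1) * 1) / ((k ! : ℕ) : ℝ) := by
          gcongr
          exact hc_le_one k
      _ = ((k:ℝ)+1) / ((k ! : ℕ) : ℝ) := by ring
  -- derivative of f inside the unit ball
  have hderiv : ∀ z : ℂ, ‖z‖ < 1 →
      HasDerivAt f (∑' k : ℕ, (c k : ℂ) * (((k:ℂ)+1) * z ^ k) / ((k ! : ℕ) : ℂ)) z := by
    intro z hz
    have hmem : z ∈ Metric.ball (0:ℂ) 1 := mem_ball_zero_iff.mpr hz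
    apply hasDerivAt_of_tendstoUniformlyOn (l := Filter.atTop)
      (g' := fun w => ∑' k : ℕ, (c k : ℂ) * (((k:ℂ)+1) * w ^ k) / ((k ! : ℕ) : ℂ))
      (f' := fun (n:ℕ) (x:ℂ) => ∑ k ∈ Finset.range n, (c k : ℂ) * (((k:ℂ)+1) * x ^ k) / ((k ! : ℕ) : ℂ))
      (f := fun (n:ℕ) (x:ℂ) => ∑ k ∈ Finset.range n, (c k : ℂ) * x ^ (k+1) / ((k ! : ℕ) : ℂ))
      Metric.isOpen_ball ?_ ?_ ?_ hmem
    · apply tendstoUniformlyOn_tsum_nat fw_summable_aux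
      intro k x hx
      rw [hnorm2 k x]
      have hx1 : ‖x‖ < 1 := mem_ball_zero_iff.mp hx
      have hp1 : ‖x‖ ^ k ≤ 1 := pow_le_one₀ (norm_nonneg x) hx1.le
      calc c k * (((k:ℝ)+1) * ‖x‖ ^ k) / ((k ! : ℕ) : ℝ)
          ≤ 1 * (((k:ℝ)+1) * 1) / ((k ! : ℕ) : ℝ) := by
            gcongr
            exact hc_le_one k
        _ = ((k:ℝ)+1) / ((k ! : ℕ) : ℝ) := by ring
    · apply Filter.Eventually.of_forall
      intro n x hx
      apply HasDerivAt.fun_sum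
      intro k hk
      have h := ((hasDerivAt_pow (k+1) x).const_mul ((c k : ℂ))).div_const ((k ! : ℕ) : ℂ)
      have e : (((k+1:ℕ)):ℂ) = (k:ℂ)+1 := by push_cast; ring
      simpa [Nat.add_sub_cancel, e] using h
    · intro x hx
      rw [hf x]
      exact (hTsum x).hasSum.tendsto_sum_nat
  refine ⟨part1, ?_⟩
  intro z hz hz0
  set t := ‖z‖ with htdef
  have ht : 0 < t := norm_pos_iff.mpr hz0
  have ht2 : t < 1/2 := hz
  have ht1 : t < 1 := by linarith
  have hd := hderiv z ht1
  have hdf : deriv f z = ∑' k : ℕ, (c k : ℂ) * (((k:ℂ)+1) * z ^ k) / ((k ! : ℕ) : ℂ) := hd.deriv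
  have hU : Summable (fun k : ℕ => z * ((c k : ℂ) * (((k:ℂ)+1) * z ^ k) / ((k ! : ℕ) : ℂ))) :=
    (hsf' z ht1.le).mul_left z
  have hVs : Summable (fun k : ℕ => (k:ℂ) * ((c k : ℂ) * z ^ (k+1) / ((k ! : ℕ) : ℂ))) := by
    apply Summable.congr (hU.sub (hTsum z))
    intro k; ring
  have hzf : z * deriv f z - f z = ∑' k : ℕ, (c (k+1) : ℂ) * z ^ (k+2) / ((k ! : ℕ) : ℂ) := by
    rw [hdf, ← tsum_mul_left, hf z, ← Summable.tsum_sub hU (hTsum z)]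
    have hV : ∀ k : ℕ, z * ((c k : ℂ) * (((k:ℂ)+1) * z ^ k) / ((k ! : ℕ) : ℂ))
        - (c k : ℂ) * z ^ (k+1) / ((k ! : ℕ) : ℂ)
        = (k:ℂ) * ((c k : ℂ) * z ^ (k+1) / ((k ! : ℕ) : ℂ)) := by
      intro k; ring
    rw [tsum_congr hV, Summable.tsum_eq_zero_add hVs]
    simp only [Nat.cast_zero, zero_mul, zero_add]
    refine tsum_congr fun k => ?_
    have hk1 : ((k:ℂ)+1) ≠ 0 := by
      have h' : ((k+1:ℕ):ℂ) ≠ 0 := Nat.cast_ne_zero.mpr (Nat.succ_ne_zero k)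
      push_cast at h'
      exact h'
    have hkf : ((k ! : ℕ) : ℂ) ≠ 0 := Nat.cast_ne_zero.mpr k.factorial_ne_zero
    rw [Nat.factorial_succ]
    push_cast
    field_simp
  have hB := boundB t ht.le ht2.le
  have hnB : ‖z * deriv f z - f z‖ ≤ t * t * (c 1 + c 2) := by
    have hnormed : ∀ k : ℕ, ‖(c (k+1) : ℂ) * z ^ (k+2) / ((k ! : ℕ) : ℂ)‖
        = t * t * (c (k+1) * t ^ k / ((k ! : ℕ) : ℝ)) := by
      intro k
      rw [hnorm1 (k+1) z (k+2) k]
      ring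
    have hsn : Summable (fun k : ℕ => ‖(c (k+1) : ℂ) * z ^ (k+2) / ((k ! : ℕ) : ℂ)‖) :=
      Summable.congr (hB.1.mul_left (t*t)) (fun k => (hnormed k).symm)
    rw [hzf]
    calc ‖∑' k : ℕ, (c (k+1) : ℂ) * z ^ (k+2) / ((k ! : ℕ) : ℂ)‖
        ≤ ∑' k : ℕ, ‖(c (k+1) : ℂ) * z ^ (k+2) / ((k ! : ℕ) : ℂ)‖ := norm_tsum_le_tsum_norm hsn
      _ = t * t * ∑' k : ℕ, c (k+1) * t ^ k / ((k ! : ℕ) : ℝ) := by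
          rw [← tsum_mul_left]; exact tsum_congr hnormed
      _ ≤ t * t * (c 1 + c 2) := mul_le_mul_of_nonneg_left hB.2 (by positivity)
  have hlow : t - t * (t * (c 1 + c 2)) ≤ ‖f z‖ := by
    have h1 := hfz_sub z ht1.le
    have h2 := abs_le.mp (abs_norm_sub_norm_le (f z) z)
    have h3 := h2.1
    rw [htdef] at *
    linarith
  have hstrict : t * t * (c 1 + c 2) < t - t * (t * (c 1 + c 2)) := by
    nlinarith [mul_pos ht ht]
  have hfpos : 0 < ‖f z‖ := lt_of_lt_of_le (by nlinarith [mul_pos ht ht]) hlow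
  have hfne : f z ≠ 0 := norm_pos_iff.mp hfpos
  have hkey : z * deriv f z / f z = 1 + (z * deriv f z - f z) / f z := by
    rw [← div_sub_one hfne]
    ring
  rw [hkey, Complex.add_re, Complex.one_re]
  have hwlt : ‖(z * deriv f z - f z) / f z‖ < 1 := by
    rw [norm_div, div_lt_one hfpos]
    calc ‖z * deriv f z - f z‖ ≤ t * t * (c 1 + c 2) := hnB
      _ < t - t * (t * (c 1 + c 2)) := hstrict
      _ ≤ ‖f z‖ := hlow
  have habs := Complex.abs_re_le_norm ((z * deriv f z - f z) / f z)
  have h5 := (abs_le.mp habs).1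
  linarith [hwlt, h5]


theorem fox_wright_starlike_half (p : ℕ) (hp : 1 ≤ p) (a b : Fin p → ℝ) (A : ℝ)
    (ha : ∀ i, 0 < a i) (hab : ∀ i, a i ≤ b i) (hA : 0 < A)
    (hineq : ∏ i, (Real.Gamma (a i + A) / Real.Gamma (b i + A) +
        (Real.exp 1 - 1) * Real.Gamma (a i + 2 * A) / Real.Gamma (b i + 2 * A))
      ≤ ∏ i, Real.Gamma (a i) / Real.Gamma (b i))
    (f : ℂ → ℂ)
    (hf : ∀ z : ℂ, f z = ∑' k : ℕ,
      ((∏ i, Real.Gamma (b i) * Real.Gamma (a i + k * A) /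
        (Real.Gamma (a i) * Real.Gamma (b i + k * A)) : ℝ) : ℂ) *
        z ^ (k + 1) / (Nat.factorial k : ℂ)) :
    (∀ z : ℂ, ‖z‖ < 1 → z ≠ 0 → ‖f z / z - 1‖ < 1) ∧
      (∀ z : ℂ, ‖z‖ < 1 / 2 → z ≠ 0 → 0 < (z * deriv f z / f z).re) := by
  have hb : ∀ i, 0 < b i := fun i => lt_of_lt_of_le (ha i) (hab i)
  have hxk : ∀ k : ℕ, (0:ℝ) ≤ (k:ℝ) * A := fun k => mul_nonneg (Nat.cast_nonneg k) hA.le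
  have hGa : ∀ (i) (k : ℕ), 0 < Real.Gamma (a i + k * A) :=
    fun i k => Real.Gamma_pos_of_pos (by have h1 := ha i; have h2 := hxk k; linarith)
  have hGb : ∀ (i) (k : ℕ), 0 < Real.Gamma (b i + k * A) :=
    fun i k => Real.Gamma_pos_of_pos (by have h1 := hb i; have h2 := hxk k; linarith)
  have hGa0 : ∀ i, 0 < Real.Gamma (a i) := fun i => Real.Gamma_pos_of_pos (ha i)
  have hGb0 : ∀ i, 0 < Real.Gamma (b i) := fun i => Real.Gamma_pos_of_pos (hb i)
  have hGaA : ∀ i, 0 < Real.Gamma (a i + A) :=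
    fun i => Real.Gamma_pos_of_pos (by have h1 := ha i; linarith)
  have hGbA : ∀ i, 0 < Real.Gamma (b i + A) :=
    fun i => Real.Gamma_pos_of_pos (by have h1 := hb i; linarith)
  have hGa2A : ∀ i, 0 < Real.Gamma (a i + 2 * A) :=
    fun i => Real.Gamma_pos_of_pos (by have h1 := ha i; linarith)
  have hGb2A : ∀ i, 0 < Real.Gamma (b i + 2 * A) :=
    fun i => Real.Gamma_pos_of_pos (by have h1 := hb i; linarith)
  set c : ℕ → ℝ := fun k => ∏ i, Real.Gamma (b i) * Real.Gamma (a i + k * A) /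
      (Real.Gamma (a i) * Real.Gamma (b i + k * A)) with hc_def
  have hc0 : c 0 = 1 := by
    rw [hc_def]
    simp only [Nat.cast_zero, zero_mul, add_zero]
    exact Finset.prod_eq_one fun i _ => by
      rw [mul_comm (Real.Gamma (b i)) (Real.Gamma (a i))]
      exact div_self (mul_pos (hGa0 i) (hGb0 i)).ne'
  have hcpos : ∀ k, 0 < c k := fun k => Finset.prod_pos fun i _ =>
    div_pos (mul_pos (hGb0 i) (hGa i k)) (mul_pos (hGa0 i) (hGb i k))
  have hmono : ∀ j k : ℕ, j ≤ k → c k ≤ c j := by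
    intro j k hjk
    rw [hc_def]
    apply Finset.prod_le_prod
    · exact fun i _ => (div_pos (mul_pos (hGb0 i) (hGa i k)) (mul_pos (hGa0 i) (hGb i k))).le
    · intro i _
      rw [div_le_div_iff₀ (mul_pos (hGa0 i) (hGb i k)) (mul_pos (hGa0 i) (hGb i j))]
      have hcross := fw_gamma_cross (ha i) (hab i) (hxk j)
        (mul_le_mul_of_nonneg_right (Nat.cast_le.mpr hjk) hA.le)
      have h2 := mul_le_mul_of_nonneg_left hcross (mul_pos (hGb0 i) (hGa0 i)).le
      linear_combination h2
  have he2 : (2:ℝ) ≤ Real.exp 1 := by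
    have h1 := Real.add_one_le_exp 1
    linarith
  have hi0 : (⟨0, hp⟩ : Fin p) ∈ Finset.univ := Finset.mem_univ _
  have hPpos : 0 < ∏ i, Real.Gamma (a i) / Real.Gamma (b i) :=
    Finset.prod_pos fun i _ => div_pos (hGa0 i) (hGb0 i)
  have hQ2pos : 0 < ∏ i, Real.Gamma (a i + 2 * A) / Real.Gamma (b i + 2 * A) :=
    Finset.prod_pos fun i _ => div_pos (hGa2A i) (hGb2A i)
  have hgnn : ∀ i, 0 ≤ Real.Gamma (a i + A) / Real.Gamma (b i + A) :=
    fun i => (div_pos (hGaA i) (hGbA i)).le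
  have hhnn : ∀ i, 0 ≤ (Real.exp 1 - 1) * Real.Gamma (a i + 2 * A) / Real.Gamma (b i + 2 * A) :=
    fun i => div_nonneg (mul_nonneg (by linarith) (hGa2A i).le) (hGb2A i).le
  have hsum1 : (∏ i, Real.Gamma (a i + A) / Real.Gamma (b i + A)) +
      (∏ i, (Real.exp 1 - 1) * Real.Gamma (a i + 2 * A) / Real.Gamma (b i + 2 * A))
      ≤ ∏ i, Real.Gamma (a i) / Real.Gamma (b i) := by
    refine le_trans ?_ hineq
    exact Finset.prod_add_prod_le hi0 (le_refl _)
      (fun j _ _ => le_add_of_nonneg_right (hhnn j))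
      (fun j _ _ => le_add_of_nonneg_left (hgnn j))
      (fun j _ => hgnn j) (fun j _ => hhnn j)
  have hprodh : (∏ i, (Real.exp 1 - 1) * Real.Gamma (a i + 2 * A) / Real.Gamma (b i + 2 * A))
      = (Real.exp 1 - 1) ^ p * ∏ i, Real.Gamma (a i + 2 * A) / Real.Gamma (b i + 2 * A) := by
    calc (∏ i, (Real.exp 1 - 1) * Real.Gamma (a i + 2 * A) / Real.Gamma (b i + 2 * A))
        = ∏ i, ((Real.exp 1 - 1) * (Real.Gamma (a i + 2 * A) / Real.Gamma (b i + 2 * A))) :=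
          Finset.prod_congr rfl fun i _ => (mul_div_assoc _ _ _)
      _ = (∏ _i : Fin p, (Real.exp 1 - 1)) *
            ∏ i, Real.Gamma (a i + 2 * A) / Real.Gamma (b i + 2 * A) := Finset.prod_mul_distrib
      _ = (Real.exp 1 - 1) ^ p * ∏ i, Real.Gamma (a i + 2 * A) / Real.Gamma (b i + 2 * A) := by
          rw [Finset.prod_const, Finset.card_univ, Fintype.card_fin]
  have hsuper : (∏ i, Real.Gamma (a i + A) / Real.Gamma (b i + A)) + (Real.exp 1 - 1) *
      (∏ i, Real.Gamma (a i + 2 * A) / Real.Gamma (b i + 2 * A))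
      ≤ ∏ i, Real.Gamma (a i) / Real.Gamma (b i) := by
    have hpow : (Real.exp 1 - 1) ≤ (Real.exp 1 - 1) ^ p := by
      calc (Real.exp 1 - 1) = (Real.exp 1 - 1) ^ 1 := (pow_one _).symm
        _ ≤ (Real.exp 1 - 1) ^ p := pow_le_pow_right₀ (by linarith) hp
    have h3 := mul_le_mul_of_nonneg_right hpow hQ2pos.le
    rw [hprodh] at hsum1
    linarith
  have hc1P : c 1 * ∏ i, Real.Gamma (a i) / Real.Gamma (b i)
      = ∏ i, Real.Gamma (a i + A) / Real.Gamma (b i + A) := by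
    rw [hc_def, ← Finset.prod_mul_distrib]
    refine Finset.prod_congr rfl fun i _ => ?_
    simp only [Nat.cast_one, one_mul]
    field_simp [(hGa0 i).ne', (hGb0 i).ne', (hGbA i).ne']
  have hc2P : c 2 * ∏ i, Real.Gamma (a i) / Real.Gamma (b i)
      = ∏ i, Real.Gamma (a i + 2 * A) / Real.Gamma (b i + 2 * A) := by
    rw [hc_def, ← Finset.prod_mul_distrib]
    refine Finset.prod_congr rfl fun i _ => ?_
    simp only [Nat.cast_ofNat]
    field_simp [(hGa0 i).ne', (hGb0 i).ne', (hGb2A i).ne']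
  have h4 : c 1 + (Real.exp 1 - 1) * c 2 ≤ 1 := by
    have h3 : (c 1 + (Real.exp 1 - 1) * c 2) * (∏ i, Real.Gamma (a i) / Real.Gamma (b i))
        ≤ 1 * ∏ i, Real.Gamma (a i) / Real.Gamma (b i) := by
      have e1 : (c 1 + (Real.exp 1 - 1) * c 2) * (∏ i, Real.Gamma (a i) / Real.Gamma (b i))
          = c 1 * (∏ i, Real.Gamma (a i) / Real.Gamma (b i)) +
            (Real.exp 1 - 1) * (c 2 * ∏ i, Real.Gamma (a i) / Real.Gamma (b i)) := by ring
      rw [e1, hc1P, hc2P, one_mul]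
      exact hsuper
    exact le_of_mul_le_mul_right h3 hPpos
  have hc12 : c 1 + c 2 ≤ 1 := by nlinarith [hcpos 2, he2]
  exact fw_main c hc0 hcpos hmono hc12 f hf
end
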